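/- Let 0 < α < 1 and δ > 0. Let g : [0,δ] → ℝ be continuous and nonincreasing with g(δ) = 0 and g(x) > 0 for all 0 ≤ x < δ. Suppose u : [0,∞) → ℝ is continuous, nondecreasing, satisfies 0 ≤ u(t) ≤ δ for all t, and solves u(t) = ∫₀ᵗ (t−s)^{−α} g(u(s)) ds for all t ≥ 0. Then u(t) → δ as t → ∞. -/

import Mathlib

/-!
If `u` stayed at or below some level `b < δ` up to a time `T`, then `g (u s) ≥ g b > 0` on
`[0, T]`, and the Volterra equation forces `u T ≥ g b * T ^ (1 - α) / (1 - α)`, which exceeds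
the bound `δ` once `T` is large. Monotonicity of `u` then keeps it above `b` from `T` on.
-/

open MeasureTheory Set Filter Topology

lemma intervalIntegrable_sub_rpow_neg {α : ℝ} (hα : α < 1) (t : ℝ) :
    IntervalIntegrable (fun s => (t - s) ^ (-α)) volume 0 t := by
  have hpow : IntervalIntegrable (fun x : ℝ => x ^ (-α)) volume 0 t :=
    intervalIntegral.intervalIntegrable_rpow' (by linarith)
  simpa using (hpow.comp_sub_left t).symm

lemma integral_sub_rpow_neg {α : ℝ} (hα : α < 1) (t : ℝ) :
    ∫ s in (0 : ℝ)..t, (t - s) ^ (-α) = t ^ (1 - α) / (1 - α) := by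
  rw [intervalIntegral.integral_comp_sub_left (fun x : ℝ => x ^ (-α)) t, sub_self, sub_zero,
    integral_rpow (Or.inl (by linarith)), neg_add_eq_sub, Real.zero_rpow (by linarith), sub_zero]

lemma mul_le_integral_sub_rpow_neg_mul {α t c : ℝ} {f : ℝ → ℝ} (hα : α < 1) (ht : 0 ≤ t)
    (hf : ContinuousOn f (Icc 0 t)) (hcf : ∀ s ∈ Icc 0 t, c ≤ f s) :
    c * (t ^ (1 - α) / (1 - α)) ≤ ∫ s in (0 : ℝ)..t, (t - s) ^ (-α) * f s := by
  have hk := intervalIntegrable_sub_rpow_neg hα t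
  rw [← integral_sub_rpow_neg hα, ← intervalIntegral.integral_const_mul]
  refine intervalIntegral.integral_mono_on ht (hk.const_mul c)
    (hk.mul_continuousOn (by rwa [uIcc_of_le ht])) fun s hs => ?_
  rw [mul_comm]
  exact mul_le_mul_of_nonneg_left (hcf s hs) (Real.rpow_nonneg (by linarith [hs.2]) _)

theorem stmt_17_general
    (α δ : ℝ) (hα1 : α < 1) (hδ : 0 < δ)
    (g : ℝ → ℝ) (hg_cont : ContinuousOn g (Icc 0 δ))
    (hg_anti : AntitoneOn g (Icc 0 δ))
    (hg_pos : ∀ x, 0 ≤ x → x < δ → 0 < g x)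
    (u : ℝ → ℝ)
    (hu_cont : ContinuousOn u (Ici 0))
    (hu_mono : MonotoneOn u (Ici 0))
    (hu_bdd : ∀ t, 0 ≤ t → 0 ≤ u t ∧ u t ≤ δ)
    (hu_eq : ∀ t, 0 ≤ t → u t = ∫ s in (0:ℝ)..t, (t - s) ^ (-α) * g (u s)) :
    Tendsto u atTop (𝓝 δ) := by
  refine tendsto_order.2 ⟨fun a ha => ?_, fun a ha => ?_⟩
  swap
  · filter_upwards [eventually_ge_atTop 0] with t ht using (hu_bdd t ht).2.trans_lt ha
  set b := max a 0
  have hb : b ∈ Icc 0 δ := ⟨le_max_right a 0, (max_lt ha hδ).le⟩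
  have hgrowth : Tendsto (fun T : ℝ => g b * (T ^ (1 - α) / (1 - α))) atTop atTop :=
    ((tendsto_rpow_atTop (by linarith)).atTop_div_const (by linarith)).const_mul_atTop
      (hg_pos b hb.1 (max_lt ha hδ))
  obtain ⟨T, hTδ, hT⟩ := ((hgrowth.eventually_gt_atTop δ).and (eventually_ge_atTop 0)).exists
  have huT : a < u T := by
    by_contra! hTa
    have hus : ∀ s ∈ Icc 0 T, u s ∈ Icc 0 δ := fun s hs => hu_bdd s hs.1
    have hgu : ∀ s ∈ Icc 0 T, g b ≤ g (u s) := fun s hs =>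
      hg_anti (hus s hs) hb ((hu_mono hs.1 hT hs.2).trans (hTa.trans (le_max_left a 0)))
    have := mul_le_integral_sub_rpow_neg_mul (f := fun s => g (u s)) hα1 hT
      (hg_cont.comp (hu_cont.mono Icc_subset_Ici_self) hus) hgu
    linarith [hu_eq T hT, (hu_bdd T hT).2]
  filter_upwards [eventually_ge_atTop T] with t ht
  exact huT.trans_le (hu_mono hT (hT.trans ht) ht)

/-- A bounded nondecreasing continuous solution of the singular Volterra equation
`u(t) = ∫₀ᵗ (t−s)^{−α} g(u(s)) ds`, with `g` continuous nonincreasing, strictly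
positive below `δ` and vanishing at `δ`, converges to `δ` at infinity. -/
theorem stmt_17
    (α δ : ℝ) (hα0 : 0 < α) (hα1 : α < 1) (hδ : 0 < δ)
    (g : ℝ → ℝ) (hg_cont : ContinuousOn g (Icc 0 δ))
    (hg_anti : AntitoneOn g (Icc 0 δ))
    (hgδ : g δ = 0)
    (hg_pos : ∀ x, 0 ≤ x → x < δ → 0 < g x)
    (u : ℝ → ℝ)
    (hu_cont : ContinuousOn u (Ici 0))
    (hu_mono : MonotoneOn u (Ici 0))
    (hu_bdd : ∀ t, 0 ≤ t → 0 ≤ u t ∧ u t ≤ δ)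
    (hu_eq : ∀ t, 0 ≤ t → u t = ∫ s in (0:ℝ)..t, (t - s) ^ (-α) * g (u s)) :
    Tendsto u atTop (𝓝 δ) :=
  stmt_17_general α δ hα1 hδ g hg_cont hg_anti hg_pos u hu_cont hu_mono hu_bdd hu_eq
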